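/- Let V be a 2-dimensional real inner product space with compatible complex structure J, and let 𝔰 = ℝ ⊕ V ⊕ ℝ carry the bracket [(a, U, x), (b, V, y)] = (0, -(b/2)U + (a/2)V, -bx + ay + (1/2)⟨JU, V⟩). Suppose T is a skew-symmetric endomorphism of V with T ≠ 0, extended to 𝔰 by acting as 0 on the two ℝ-factors, and suppose this extension is a derivation of 𝔰 (equivalently TJ = JT). Let ξ = (a, X, b), η = (c, Y, d) ∈ 𝔰 with ⟨X, Y⟩ = 0 and Y ≠ 0, and suppose that λη = (0, T(Y), 0) + [ξ, η] for some λ ∈ ℝ. Then λ = 0, a = 0, c ≠ 0, X ≠ 0, and (1/2)⟨JX, Y⟩ = bc, so also b ≠ 0. -/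
import Mathlib

open scoped RealInnerProductSpace

lemma aux14 (V : Type*) [NormedAddCommGroup V] [InnerProductSpace ℝ V]
    (hdim : Module.finrank ℝ V = 2) (u v w : V) (hu : u ≠ 0) (hv : v ≠ 0)
    (huv : ⟪u, v⟫ = 0) (hwu : ⟪w, u⟫ = 0) (hwv : ⟪w, v⟫ = 0) : w = 0 := by
  haveI : FiniteDimensional ℝ V := Module.finite_of_finrank_eq_succ hdim
  have hli : LinearIndependent ℝ ![u, v] := by
    rw [LinearIndependent.pair_iff]
    intro s t hst
    have h1 : s * ⟪u, u⟫ = 0 := by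
      have := congrArg (fun z => ⟪u, z⟫) hst
      simp only [inner_add_right, real_inner_smul_right, huv, inner_zero_right] at this
      linarith
    have h2 : t * ⟪v, v⟫ = 0 := by
      have := congrArg (fun z => ⟪v, z⟫) hst
      simp only [inner_add_right, real_inner_smul_right, inner_zero_right] at this
      rw [real_inner_comm u v, huv] at this
      linarith
    have huu : ⟪u, u⟫ ≠ 0 := fun h => hu (inner_self_eq_zero.mp h)
    have hvv : ⟪v, v⟫ ≠ 0 := fun h => hv (inner_self_eq_zero.mp h)
    constructor
    · rcases mul_eq_zero.mp h1 with h | h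
      · exact h
      · exact absurd h huu
    · rcases mul_eq_zero.mp h2 with h | h
      · exact h
      · exact absurd h hvv
  have hspan : Submodule.span ℝ (Set.range ![u, v]) = ⊤ := by
    apply Submodule.eq_top_of_finrank_eq
    rw [finrank_span_eq_card hli, hdim]
    simp
  have hr : (Set.range ![u, v]) = {u, v} := by
    ext x
    simp [Matrix.range_cons, Matrix.range_empty]
    tauto
  rw [hr] at hspan
  have hw : w ∈ Submodule.span ℝ ({u, v} : Set V) := by rw [hspan]; trivial
  rw [Submodule.mem_span_pair] at hw
  obtain ⟨s, t, hst⟩ := hw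
  have hww : ⟪w, w⟫ = 0 := by
    nth_rewrite 2 [← hst]
    rw [inner_add_right, real_inner_smul_right, real_inner_smul_right, hwu, hwv]
    ring
  exact inner_self_eq_zero.mp hww

/-- Case 2 (Y ≠ 0) of Lemma 3.3: if T is a nonzero skew-symmetric
endomorphism of V commuting with J (acting as a derivation of 𝔰, trivially on
the two ℝ-factors), ξ = (a, X, b), η = (c, Y, d) with X ⊥ Y, Y ≠ 0, and
λη = (0, T(Y), 0) + [ξ, η], then λ = 0, a = 0, c ≠ 0, X ≠ 0,
(1/2)⟨JX, Y⟩ = bc, and b ≠ 0. -/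
theorem stmt14
    (V : Type*) [NormedAddCommGroup V] [InnerProductSpace ℝ V]
    (hdim : Module.finrank ℝ V = 2)
    (J : V →ₗ[ℝ] V)
    (hJ2 : ∀ v : V, J (J v) = -v)
    (hJi : ∀ u v : V, ⟪J u, J v⟫ = ⟪u, v⟫)
    (br : (ℝ × V × ℝ) → (ℝ × V × ℝ) → (ℝ × V × ℝ))
    (hbr : ∀ p q : ℝ × V × ℝ,
      br p q = (0, -(q.1 / 2) • p.2.1 + (p.1 / 2) • q.2.1,
        -q.1 * p.2.2 + p.1 * q.2.2 + (1 / 2) * ⟪J p.2.1, q.2.1⟫))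
    (T : V →ₗ[ℝ] V)
    (hskew : ∀ x y : V, ⟪T x, y⟫ = -⟪x, T y⟫)
    (hT : T ≠ 0)
    (hTJ : ∀ v : V, T (J v) = J (T v))
    (a b c d : ℝ) (X Y : V)
    (hXY : ⟪X, Y⟫ = 0) (hY : Y ≠ 0)
    (lam : ℝ)
    (heq : lam • ((c, Y, d) : ℝ × V × ℝ)
      = ((0 : ℝ), T Y, (0 : ℝ)) + br (a, X, b) (c, Y, d)) :
    lam = 0 ∧ a = 0 ∧ c ≠ 0 ∧ X ≠ 0 ∧ (1 / 2) * ⟪J X, Y⟫ = b * c ∧ b ≠ 0 := by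
  rw [hbr] at heq
  have h1 : lam * c = 0 := congrArg Prod.fst heq |>.trans (by simp)
  have h2 : lam • Y = T Y + (-(c / 2) • X + (a / 2) • Y) := by
    have := congrArg (fun p : ℝ × V × ℝ => p.2.1) heq
    simpa using this
  have h3 : lam * d = -c * b + a * d + (1 / 2) * ⟪J X, Y⟫ := by
    have := congrArg (fun p : ℝ × V × ℝ => p.2.2) heq
    simpa using this
  have hTYY : ⟪T Y, Y⟫ = 0 := by
    have h := hskew Y Y
    have h' := real_inner_comm Y (T Y)
    linarith
  have hYY : ⟪Y, Y⟫ ≠ 0 := fun h => hY (inner_self_eq_zero.mp h)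
  have hlam : lam = a / 2 := by
    have h := congrArg (fun z => ⟪z, Y⟫) h2
    simp only [inner_add_left, real_inner_smul_left, hTYY] at h
    rw [hXY] at h
    have h' : lam * ⟪Y, Y⟫ = (a / 2) * ⟪Y, Y⟫ := by linarith
    exact mul_right_cancel₀ hYY h'
  have hTY : T Y = (c / 2) • X := by
    rw [hlam] at h2
    have h := sub_eq_zero.mpr h2
    rw [show (a / 2 : ℝ) • Y - (T Y + (-(c / 2) • X + (a / 2) • Y))
        = (c / 2) • X - T Y by module] at h
    exact (sub_eq_zero.mp h).symm
  have hJY : J Y ≠ 0 := by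
    intro h
    apply hY
    have := hJ2 Y
    rw [h, map_zero] at this
    simpa using this.symm
  have hJYY : ⟪Y, J Y⟫ = 0 := by
    have h := hJi (J Y) Y
    rw [hJ2, inner_neg_left] at h
    have h' := real_inner_comm (J Y) Y
    linarith
  have hTYne : T Y ≠ 0 := by
    intro h0
    apply hT
    ext v
    have hTJY : T (J Y) = 0 := by rw [hTJ, h0, map_zero]
    simp only [LinearMap.zero_apply]
    apply aux14 V hdim Y (J Y) (T v) hY hJY hJYY
    · have := hskew Y v
      rw [h0, inner_zero_left] at this
      rw [real_inner_comm]
      linarith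
    · have := hskew (J Y) v
      rw [hTJY, inner_zero_left] at this
      rw [real_inner_comm]
      linarith
  have hc : c ≠ 0 := by
    intro h
    rw [h] at hTY
    simp at hTY
    exact hTYne hTY
  have hX : X ≠ 0 := by
    intro h
    rw [h, smul_zero] at hTY
    exact hTYne hTY
  have hlam0 : lam = 0 := by
    rcases mul_eq_zero.mp h1 with h | h
    · exact h
    · exact absurd h hc
  have ha : a = 0 := by rw [hlam0] at hlam; linarith
  have hJXY : ⟪J X, Y⟫ ≠ 0 := by
    intro h
    have hXJX : ⟪X, J X⟫ = 0 := by
      have h1' := hJi X (J X)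
      rw [hJ2, inner_neg_right] at h1'
      have h2' := real_inner_comm (J X) X
      linarith
    have hJX0 : J X = 0 := by
      apply aux14 V hdim X Y (J X) hX hY hXY
      · rw [real_inner_comm]; exact hXJX
      · exact h
    apply hX
    have := hJ2 X
    rw [hJX0, map_zero] at this
    simpa using this.symm
  have hhalf : (1 / 2) * ⟪J X, Y⟫ = b * c := by
    rw [hlam0, ha] at h3
    simp at h3
    linarith
  have hb : b ≠ 0 := by
    intro h
    rw [h, zero_mul] at hhalf
    exact hJXY (by linarith)
  exact ⟨hlam0, ha, hc, hX, hhalf, hb⟩
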